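/- Let $S = K[x_1,\ldots,x_n]$ and let $I \subset S$ be an $\mathfrak{m}$-primary stable monomial ideal. For $j > 0$, the multiplication map $\mu_j : (S/I)_{j-1} \to (S/I)_j$, $f \mapsto x_n f$, is surjective if and only if $(x_1,\ldots,x_{n-1})^j \subseteq I$. -/

import Mathlib

open MvPolynomial

variable {K : Type*} [Field K] {n : ℕ}

/-- The total degree of an exponent vector. -/
def mdeg {n : ℕ} (m : Fin n →₀ ℕ) : ℕ := m.sum fun _ e => e

/-- `I` is a monomial ideal: it contains every monomial of each of its elements. -/
def IsMonomialIdeal (I : Ideal (MvPolynomial (Fin n) K)) : Prop :=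
  ∀ f ∈ I, ∀ m ∈ f.support, (monomial m (1 : K)) ∈ I

/-- `I` is stable: for every monomial `u ∈ I` with largest dividing variable `x_k`,
and every `i ≤ k`, the monomial `(x_i / x_k) * u` lies in `I`. -/
def IsStableIdeal (I : Ideal (MvPolynomial (Fin n) K)) : Prop :=
  ∀ m : Fin n →₀ ℕ, (monomial m (1 : K)) ∈ I →
    ∀ k i : Fin n, m k ≠ 0 → (∀ k', k < k' → m k' = 0) → i ≤ k →
      (monomial (m + Finsupp.single i 1 - Finsupp.single k 1) (1 : K)) ∈ I

/-- `I` is strongly stable: for every monomial `u ∈ I`, every variable `x_k` dividing `u`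
and every `i ≤ k`, the monomial `(x_i / x_k) * u` lies in `I`. -/
def IsStronglyStableIdeal (I : Ideal (MvPolynomial (Fin n) K)) : Prop :=
  ∀ m : Fin n →₀ ℕ, (monomial m (1 : K)) ∈ I →
    ∀ k i : Fin n, m k ≠ 0 → i ≤ k →
      (monomial (m + Finsupp.single i 1 - Finsupp.single k 1) (1 : K)) ∈ I

/-- `v <_lex u` for exponent vectors, lex order with `x_1 > x_2 > ⋯ > x_n`. -/
def lexLt {n : ℕ} (v u : Fin n →₀ ℕ) : Prop :=
  ∃ i : Fin n, (∀ j < i, v j = u j) ∧ v i < u i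

/-- `I` is a lexsegment ideal. -/
def IsLexsegmentIdeal (I : Ideal (MvPolynomial (Fin n) K)) : Prop :=
  IsMonomialIdeal I ∧
    ∀ u v : Fin n →₀ ℕ, (monomial u (1 : K)) ∈ I → mdeg v = mdeg u → lexLt u v →
      (monomial v (1 : K)) ∈ I

/-- The degree `j` piece of `S/I`, as the image of the degree `j` homogeneous polynomials. -/
noncomputable def Qpiece (I : Ideal (MvPolynomial (Fin n) K)) (j : ℕ) :
    Submodule K (MvPolynomial (Fin n) K ⧸ I) :=
  (homogeneousSubmodule (Fin n) K j).map (Ideal.Quotient.mkₐ K I).toLinearMap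

/-- Multiplication by `g` maps `(S/I)_j` injectively (to `(S/I)_{j'}`). -/
def QInj (I : Ideal (MvPolynomial (Fin n) K)) (g : MvPolynomial (Fin n) K)
    (j _j' : ℕ) : Prop :=
  ∀ f₁ ∈ Qpiece I j, ∀ f₂ ∈ Qpiece I j,
    Ideal.Quotient.mk I g * f₁ = Ideal.Quotient.mk I g * f₂ → f₁ = f₂

/-- Multiplication by `g` maps `(S/I)_j` onto `(S/I)_{j'}`. -/
def QSurj (I : Ideal (MvPolynomial (Fin n) K)) (g : MvPolynomial (Fin n) K)
    (j j' : ℕ) : Prop :=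
  ∀ h ∈ Qpiece I j', ∃ f ∈ Qpiece I j, Ideal.Quotient.mk I g * f = h

/-- Multiplication by `g` from `(S/I)_j` to `(S/I)_{j'}` has maximal rank. -/
def MulMaxRank (I : Ideal (MvPolynomial (Fin n) K)) (g : MvPolynomial (Fin n) K)
    (j j' : ℕ) : Prop :=
  QInj I g j j' ∨ QSurj I g j j'

/-!
For a monomial ideal `I`, the degree `d + 1` piece of `S/I` is spanned by the classes of monomials.
Those divisible by `x_k` are `x_k` times a monomial of degree `d`. A monomial `u` not divisible by
`x_k` lies in the image of multiplication by `x_k` only if `x_k q - u ∈ I` for some `q`, and since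
the coefficient of `u` in `x_k q - u` is `-1`, this forces `u ∈ I`. So `x_k` maps onto degree
`d + 1` iff `I` contains every monomial of degree `d + 1` in the other variables, which generate
`(x_i : i ≠ k)^(d + 1)`.
-/

open scoped Pointwise in
theorem pow_span_X_image {σ R : Type*} [CommSemiring R] (s : Set σ) (j : ℕ) :
    Ideal.span (X '' s : Set (MvPolynomial σ R)) ^ j =
      Ideal.span ((monomial · 1) '' {u | u.degree = j ∧ ↑u.support ⊆ s}) := by
  rw [Ideal.span, Submodule.span_pow, Finsupp.image_pow_eq_finsuppProd_image]
  simp [monomial_eq, Ideal.span]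

section Qpiece

variable {I : Ideal (MvPolynomial (Fin n) K)}

theorem mk_monomial_mem_qpiece {d : ℕ} {u : Fin n →₀ ℕ} (hu : u.degree = d) (c : K) :
    Ideal.Quotient.mk I (monomial u c) ∈ Qpiece I d :=
  ⟨monomial u c, isHomogeneous_monomial c hu, rfl⟩

theorem qpiece_eq_span (d : ℕ) :
    Qpiece I d = Submodule.span K
      ((fun u => Ideal.Quotient.mk I (monomial u 1)) '' {u | u.degree = d}) := by
  rw [Qpiece, homogeneousSubmodule_eq_finsupp_supported, AddMonoidAlgebra.supported_eq_span_single,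
    Submodule.map_span, ← Set.image_comp]
  rfl

theorem qSurj_iff_le_map (g : MvPolynomial (Fin n) K) (d d' : ℕ) :
    QSurj I g d d' ↔
      Qpiece I d' ≤ (Qpiece I d).map (LinearMap.mulLeft K (Ideal.Quotient.mk I g)) := by
  simp [QSurj, SetLike.le_def, eq_comm]

theorem monomial_mem_of_qSurj_X (hI : IsMonomialIdeal I) {k : Fin n} {d : ℕ}
    (hsurj : QSurj I (X k) d (d + 1)) {u : Fin n →₀ ℕ} (hu : u.degree = d + 1) (hk : u k = 0) :
    monomial u 1 ∈ I := by
  obtain ⟨_, ⟨q, -, rfl⟩, hq⟩ := hsurj _ (mk_monomial_mem_qpiece hu 1)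
  rw [AlgHom.toLinearMap_apply, Ideal.Quotient.mkₐ_eq_mk, ← map_mul, Ideal.Quotient.eq] at hq
  have hcoeff : coeff u (X k * q - monomial u 1) = -1 := by
    classical
    rw [coeff_sub, coeff_X_mul', if_neg (by simp [hk]), coeff_monomial, if_pos rfl, zero_sub]
  exact hI _ hq u (mem_support_iff.2 (by simp [hcoeff]))

theorem qSurj_X_of_monomial_mem {k : Fin n} {d : ℕ}
    (h : ∀ u : Fin n →₀ ℕ, u.degree = d + 1 → u k = 0 → monomial u 1 ∈ I) :
    QSurj I (X k) d (d + 1) := by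
  rw [qSurj_iff_le_map, qpiece_eq_span, Submodule.span_le]
  rintro _ ⟨u, hu, rfl⟩
  by_cases hk : u k = 0
  · exact ⟨0, zero_mem _, by simp [Ideal.Quotient.eq_zero_iff_mem.2 (h u hu hk)]⟩
  · obtain ⟨v, rfl⟩ : ∃ v, u = Finsupp.single k 1 + v :=
      le_iff_exists_add.1 (Finsupp.single_le_iff.2 (Nat.one_le_iff_ne_zero.2 hk))
    have hv : v.degree = d := by
      simp only [Set.mem_ofPred_eq, map_add, Finsupp.degree_single] at hu
      omega
    refine ⟨_, mk_monomial_mem_qpiece hv 1, ?_⟩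
    simp [X, ← map_mul, monomial_mul]

theorem qSurj_X_iff (hI : IsMonomialIdeal I) (k : Fin n) (d : ℕ) :
    QSurj I (X k) d (d + 1) ↔ Ideal.span (X '' {k}ᶜ) ^ (d + 1) ≤ I := by
  simp only [pow_span_X_image, Ideal.span_le, Set.image_subset_iff,
    Set.subset_compl_singleton_iff, Finset.mem_coe, Finsupp.mem_support_iff, not_not]
  exact ⟨fun hsurj u ⟨hu, hk⟩ => monomial_mem_of_qSurj_X hI hsurj hu hk,
    fun h => qSurj_X_of_monomial_mem fun u hu hk => h ⟨hu, hk⟩⟩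

end Qpiece

/-- For an `𝔪`-primary stable monomial ideal and `j > 0`, multiplication by `x_n` from
`(S/I)_{j-1}` onto `(S/I)_j` is surjective iff `(x_1,…,x_{n-1})^j ⊆ I`. -/
theorem stmt_2 (hn : 1 ≤ n) (I : Ideal (MvPolynomial (Fin n) K))
    (hmon : IsMonomialIdeal I)
    (j : ℕ) (hj : 0 < j) :
    QSurj I (X (⟨n - 1, by omega⟩ : Fin n)) (j - 1) j ↔
      (Ideal.span ((fun i : Fin n => (X i : MvPolynomial (Fin n) K)) ''
          {i : Fin n | (i : ℕ) < n - 1})) ^ j ≤ I := by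
  obtain ⟨d, rfl⟩ : ∃ d, j = d + 1 := ⟨j - 1, by omega⟩
  have hlast : {i : Fin n | (i : ℕ) < n - 1} = {⟨n - 1, by omega⟩}ᶜ := by
    ext i
    simp only [Set.mem_ofPred_eq, Set.mem_compl_iff, Set.mem_singleton_iff, Fin.ext_iff]
    omega
  rw [hlast]
  exact qSurj_X_iff hmon _ d
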